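/- arXiv:2401.11046 — 2 statements merged into one kernel-verified Lean document; each statement's English description precedes it below -/
import Mathlib

section
/- Proposition (differentiability and piecewise gradient of the profiled log-likelihood in the entry game). Let Θ ⊆ ℝ^{d_θ}, and let F₀₀, F₁₁, η₁, η₂, η₃ : Θ → (0,1) be continuously differentiable on int Θ with, for some c > 0 and all θ ∈ Θ: F₀₀(θ) ≥ c, F₁₁(θ) ≥ c, η₃(θ) ≤ η₂(θ), η_j(θ) ≥ c and η₁(θ) − η_j(θ) ≥ c for j = 2, 3, and η₁(θ) = 1 − F₀₀(θ) − F₁₁(θ). Let p₀₀, p₁₁, p₁₀, p₀₁ > 0 with sum 1, let z*(θ) be the clamp of η₁(θ) p₁₀/(p₁₀+p₀₁) to [η₃(θ), η₂(θ)], and define V(θ) = p₀₀ ln F₀₀(θ) + p₁₁ ln F₁₁(θ) + p₁₀ ln z*(θ) + p₀₁ ln(η₁(θ) − z*(θ)). Then V is differentiable on int Θ with ∇V(θ) = p₀₀ ∇F₀₀/F₀₀ + p₁₁ ∇F₁₁/F₁₁ + G(θ), where: G(θ) = (p₁₀+p₀₁) ∇η₁/η₁ if η₃ ≤ η₁ p₁₀/(p₁₀+p₀₁)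 ≤ η₂; G(θ) = p₁₀ ∇η₂/η₂ + p₀₁ (∇η₁ − ∇η₂)/(η₁ − η₂) if η₁ p₁₀/(p₁₀+p₀₁) > η₂; and G(θ) = p₁₀ ∇η₃/η₃ + p₀₁ (∇η₁ − ∇η₃)/(η₁ − η₃) if η₁ p₁₀/(p₁₀+p₀₁) < η₃ (all functions evaluated at θ). -/
/-!
Only the `(1,0)`/`(0,1)` part `p₁₀ ln z* + p₀₁ ln (η₁ − z*)` is non-smooth, and the clamp `z*`
always equals one of the smooth candidates `t = η₁ p₁₀/(p₁₀+p₀₁)`, `η₂`, `η₃`. When `t` lies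
outside `[η₃, η₂]` at `θ`, `z*` is locally the nearer endpoint (this uses `η₃ ≤ η₂` near `θ`),
which gives the outer two formulas. Otherwise `z*(θ) = t` is the unconstrained maximiser of
`z ↦ p₁₀ ln z + p₀₁ ln (η₁ − z)`, so the `z`-derivative vanishes there (envelope theorem): every
candidate meeting `t` at `θ` gives the same derivative `((p₁₀+p₀₁)/η₁) ∇η₁`. A function that near
a point agrees pointwise with one of finitely many functions sharing its value and derivative
there has that derivative too; continuity of `z*` rules out the candidates not meeting `t`.
-/

open Set Filter Asymptotics
open scoped Topology

section Selection

variable {𝕜 E F : Type*} [NontriviallyNormedField 𝕜] [NormedAddCommGroup E] [NormedSpace 𝕜 E]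
  [NormedAddCommGroup F] [NormedSpace 𝕜 F]

theorem hasFDerivAt_of_eventually_exists_eq {ι : Type*} {s : Set ι} (hs : s.Finite)
    {f : ι → E → F} {g : E → F} {L : E →L[𝕜] F} {x : E}
    (hf : ∀ i ∈ s, HasFDerivAt (f i) L x) (hfx : ∀ i ∈ s, f i x = g x)
    (hg : ∀ᶠ y in 𝓝 x, ∃ i ∈ s, g y = f i y) : HasFDerivAt g L x := by
  refine .of_isLittleO ?_
  have hsum : (fun y => ∑ i ∈ hs.toFinset, ‖f i y - f i x - L (y - x)‖) =o[𝓝 x]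
      fun y => y - x :=
    IsLittleO.fun_sum fun i hi => (hf i (hs.mem_toFinset.1 hi)).isLittleO.norm_left
  refine (isBigO_iff.2 ⟨1, ?_⟩).trans_isLittleO hsum
  filter_upwards [hg] with y ⟨i, hi, hy⟩
  rw [one_mul, Real.norm_of_nonneg (by positivity), hy, ← hfx i hi]
  exact Finset.single_le_sum (f := fun i => ‖f i y - f i x - L (y - x)‖)
    (fun _ _ => norm_nonneg _) (hs.mem_toFinset.2 hi)

theorem eventually_exists_eq_of_continuousAt {X Y ι : Type*} [TopologicalSpace X]
    [TopologicalSpace Y] [T2Space Y] {s : Set ι} (hs : s.Finite) {f : ι → X → Y} {g : X → Y}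
    {x : X} (hf : ∀ i ∈ s, ContinuousAt (f i) x) (hg : ContinuousAt g x)
    (hcover : ∀ᶠ y in 𝓝 x, ∃ i ∈ s, g y = f i y) :
    ∀ᶠ y in 𝓝 x, ∃ i ∈ s, f i x = g x ∧ g y = f i y := by
  have hsep : ∀ᶠ y in 𝓝 x, ∀ i ∈ s, f i x ≠ g x → g y ≠ f i y := by
    refine hs.eventually_all.2 fun i hi => ?_
    by_cases hix : f i x = g x
    · exact .of_forall fun _ h => absurd hix h
    · exact ((hg.ne_iff_eventually_ne (hf i hi)).1 (Ne.symm hix)).mono fun _ h _ => h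
  filter_upwards [hcover, hsep] with y ⟨i, hi, hy⟩ hne
  exact ⟨i, hi, not_not.1 fun hix => hne i hi hix hy, hy⟩

theorem hasFDerivAt_comp_of_continuous_selection {Y : Type*} [TopologicalSpace Y] [T2Space Y]
    {s : Set (E → Y)} (hs : s.Finite) {Φ : E → Y → F} {z : E → Y} {L : E →L[𝕜] F} {x : E}
    (hz : ContinuousAt z x) (hsc : ∀ ζ ∈ s, ContinuousAt ζ x)
    (hcover : ∀ᶠ y in 𝓝 x, ∃ ζ ∈ s, z y = ζ y)
    (hΦ : ∀ ζ ∈ s, ζ x = z x → HasFDerivAt (fun y => Φ y (ζ y)) L x) :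
    HasFDerivAt (fun y => Φ y (z y)) L x := by
  refine hasFDerivAt_of_eventually_exists_eq (hs.sep fun ζ => ζ x = z x)
    (f := fun ζ y => Φ y (ζ y)) (fun ζ hζ => hΦ ζ hζ.1 hζ.2) (fun ζ hζ => by rw [hζ.2]) ?_
  filter_upwards [eventually_exists_eq_of_continuousAt hs (f := fun ζ => ζ) hsc hz hcover]
    with y ⟨ζ, hζ, hζx, hy⟩
  exact ⟨ζ, ⟨hζ, hζx⟩, by rw [hy]⟩

end Selection

noncomputable section SplitLikelihood

/-- `splitLogLik p₁₀ p₀₁ η₁ z` is the log-likelihood contribution of `(1,0)` and `(0,1)` when the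
model gives `z` to `(1,0)` and `η₁ − z` to `(0,1)`; `profiledSplit` is `z*`. -/
def splitLogLik (p q e z : ℝ) : ℝ := p * Real.log z + q * Real.log (e - z)

def unconstrainedSplit (p q e : ℝ) : ℝ := e * p / (p + q)

def profiledSplit (p q e u l : ℝ) : ℝ := max l (min u (unconstrainedSplit p q e))

theorem smul_add_smul_sub_unconstrainedSplit {M : Type*} [AddCommGroup M] [Module ℝ M]
    {p q e : ℝ} (hp : 0 < p) (hq : 0 < q) (he : e ≠ 0) (u v : M) :
    (p / unconstrainedSplit p q e) • u + (q / (e - unconstrainedSplit p q e)) • (v - u) =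
      ((p + q) / e) • v := by
  have hpq : p + q ≠ 0 := by positivity
  have h₁ : p / unconstrainedSplit p q e = (p + q) / e := by
    unfold unconstrainedSplit; field_simp
  have h₂ : q / (e - unconstrainedSplit p q e) = (p + q) / e := by
    unfold unconstrainedSplit
    rw [show e - e * p / (p + q) = e * q / (p + q) by field_simp; ring]
    field_simp
  rw [h₁, h₂, smul_sub, add_sub_cancel]

variable {E : Type*} [NormedAddCommGroup E] [NormedSpace ℝ E]
  {e z : E → ℝ} {e' z' : E →L[ℝ] ℝ} {x : E}

theorem hasFDerivAt_splitLogLik (p q : ℝ) (he : HasFDerivAt e e' x) (hz : HasFDerivAt z z' x)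
    (hz₀ : 0 < z x) (hze : z x < e x) :
    HasFDerivAt (fun y => splitLogLik p q (e y) (z y))
      ((p / z x) • z' + (q / (e x - z x)) • (e' - z')) x := by
  refine (((hz.log hz₀.ne').const_mul p).add
    (((he.sub hz).log (sub_pos.2 hze).ne').const_mul q)).congr_fderiv ?_
  simp only [smul_smul, div_eq_mul_inv, Pi.sub_apply]

theorem hasFDerivAt_splitLogLik_of_eq_unconstrainedSplit {p q : ℝ} (hp : 0 < p) (hq : 0 < q)
    (he : HasFDerivAt e e' x) (hz : HasFDerivAt z z' x) (he₀ : 0 < e x)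
    (hzx : z x = unconstrainedSplit p q (e x)) :
    HasFDerivAt (fun y => splitLogLik p q (e y) (z y)) (((p + q) / e x) • e') x := by
  have hz₀ : 0 < z x := by rw [hzx, unconstrainedSplit]; positivity
  have hze : z x < e x := by
    rw [hzx, unconstrainedSplit, div_lt_iff₀ (by positivity)]; nlinarith
  refine (hasFDerivAt_splitLogLik p q he hz hz₀ hze).congr_fderiv ?_
  rw [hzx]
  exact smul_add_smul_sub_unconstrainedSplit hp hq he₀.ne' z' e'

theorem profiledSplit_eq_or (p q e u l : ℝ) :
    profiledSplit p q e u l = unconstrainedSplit p q e ∨ profiledSplit p q e u l = u ∨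
      profiledSplit p q e u l = l := by
  unfold profiledSplit
  rcases max_choice l (min u (unconstrainedSplit p q e)) with h | h <;> rw [h]
  · exact .inr (.inr rfl)
  · rcases min_choice u (unconstrainedSplit p q e) with h' | h' <;> rw [h'] <;> simp

theorem hasFDerivAt_splitLogLik_profiledSplit {p q : ℝ} (hp : 0 < p) (hq : 0 < q)
    {u l : E → ℝ} {u' l' : E →L[ℝ] ℝ}
    (he : HasFDerivAt e e' x) (hu : HasFDerivAt u u' x) (hl : HasFDerivAt l l' x)
    (hl₀ : 0 < l x) (hue : u x < e x) (hlu : ∀ᶠ y in 𝓝 x, l y ≤ u y) :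
    HasFDerivAt (fun y => splitLogLik p q (e y) (profiledSplit p q (e y) (u y) (l y)))
      (if l x ≤ e x * p / (p + q) ∧ e x * p / (p + q) ≤ u x then ((p + q) / e x) • e'
       else if u x < e x * p / (p + q) then (p / u x) • u' + (q / (e x - u x)) • (e' - u')
       else (p / l x) • l' + (q / (e x - l x)) • (e' - l')) x := by
  set t : E → ℝ := fun y => unconstrainedSplit p q (e y)
  have ht : HasFDerivAt t ((p / (p + q)) • e') x := by
    simpa only [t, unconstrainedSplit, mul_div_assoc] using he.mul_const (p / (p + q))
  have hlux : l x ≤ u x := hlu.self_of_nhds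
  change HasFDerivAt _ (if l x ≤ t x ∧ t x ≤ u x then _ else if u x < t x then _ else _) x
  split_ifs with hmid hut
  · have he₀ : 0 < e x := by linarith
    have hzx : profiledSplit p q (e x) (u x) (l x) = t x := by
      rw [profiledSplit, min_eq_right hmid.2, max_eq_right hmid.1]
    refine hasFDerivAt_comp_of_continuous_selection (s := {t, u, l}) (toFinite _)
      (Φ := fun y z => splitLogLik p q (e y) z)
      (hl.continuousAt.max (hu.continuousAt.min ht.continuousAt)) ?_ ?_ ?_
    · rintro ζ (rfl | rfl | rfl)
      exacts [ht.continuousAt, hu.continuousAt, hl.continuousAt]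
    · refine .of_forall fun y => ?_
      rcases profiledSplit_eq_or p q (e y) (u y) (l y) with h | h | h
      exacts [⟨t, by simp, h⟩, ⟨u, by simp, h⟩, ⟨l, by simp, h⟩]
    · rintro ζ (rfl | rfl | rfl) hζ
      · exact hasFDerivAt_splitLogLik_of_eq_unconstrainedSplit hp hq he ht he₀ rfl
      · exact hasFDerivAt_splitLogLik_of_eq_unconstrainedSplit hp hq he hu he₀ (hζ.trans hzx)
      · exact hasFDerivAt_splitLogLik_of_eq_unconstrainedSplit hp hq he hl he₀ (hζ.trans hzx)
  · refine (hasFDerivAt_splitLogLik p q he hu (by linarith) hue).congr_of_eventuallyEq ?_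
    filter_upwards [hu.continuousAt.eventually_lt ht.continuousAt hut, hlu] with y hy hly
    rw [profiledSplit, min_eq_left hy.le, max_eq_right hly]
  · have htl : t x < l x := by
      by_contra! h
      exact hmid ⟨h, not_lt.1 hut⟩
    refine (hasFDerivAt_splitLogLik p q he hl hl₀ (by linarith)).congr_of_eventuallyEq ?_
    filter_upwards [ht.continuousAt.eventually_lt hl.continuousAt htl, hlu] with y hy hly
    rw [profiledSplit, min_eq_right (hy.le.trans hly), max_eq_left hy.le]

end SplitLikelihood

theorem entry_game_profiled_loglikelihood_gradient_general {dθ : ℕ}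
    (Θ : Set (EuclideanSpace ℝ (Fin dθ)))
    (F00 F11 η₁ η₂ η₃ : EuclideanSpace ℝ (Fin dθ) → ℝ)
    (gF00 gF11 gη₁ gη₂ gη₃ : EuclideanSpace ℝ (Fin dθ) → EuclideanSpace ℝ (Fin dθ))
    (c : ℝ) (hc : 0 < c)
    -- the model probabilities take values in (0,1)
    (hrange : ∀ θ ∈ Θ, F00 θ ∈ Ioo (0:ℝ) 1 ∧ F11 θ ∈ Ioo (0:ℝ) 1 ∧
      η₁ θ ∈ Ioo (0:ℝ) 1 ∧ η₂ θ ∈ Ioo (0:ℝ) 1 ∧ η₃ θ ∈ Ioo (0:ℝ) 1)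
    -- uniform lower bounds
    (hη₃₂ : ∀ θ ∈ Θ, η₃ θ ≤ η₂ θ)
    (hη₁₂ : ∀ θ ∈ Θ, c ≤ η₁ θ - η₂ θ)
    -- continuous differentiability on `int Θ`, with the given gradients
    (hdF00 : ∀ θ ∈ interior Θ, HasGradientAt F00 (gF00 θ) θ)
    (hdF11 : ∀ θ ∈ interior Θ, HasGradientAt F11 (gF11 θ) θ)
    (hdη₁ : ∀ θ ∈ interior Θ, HasGradientAt η₁ (gη₁ θ) θ)
    (hdη₂ : ∀ θ ∈ interior Θ, HasGradientAt η₂ (gη₂ θ) θ)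
    (hdη₃ : ∀ θ ∈ interior Θ, HasGradientAt η₃ (gη₃ θ) θ)
    -- observed probabilities
    (p00 p11 p10 p01 : ℝ)
    (hp : 0 < p00 ∧ 0 < p11 ∧ 0 < p10 ∧ 0 < p01) :
    ∀ θ ∈ interior Θ,
      HasGradientAt
        (fun ϑ =>
          p00 * Real.log (F00 ϑ) + p11 * Real.log (F11 ϑ) +
          p10 * Real.log (max (η₃ ϑ) (min (η₂ ϑ) (η₁ ϑ * p10 / (p10 + p01)))) +
          p01 * Real.log (η₁ ϑ - max (η₃ ϑ) (min (η₂ ϑ) (η₁ ϑ * p10 / (p10 + p01)))))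
        ((p00 / F00 θ) • gF00 θ + (p11 / F11 θ) • gF11 θ +
          (if η₃ θ ≤ η₁ θ * p10 / (p10 + p01) ∧ η₁ θ * p10 / (p10 + p01) ≤ η₂ θ then
            ((p10 + p01) / η₁ θ) • gη₁ θ
          else if η₂ θ < η₁ θ * p10 / (p10 + p01) then
            (p10 / η₂ θ) • gη₂ θ + (p01 / (η₁ θ - η₂ θ)) • (gη₁ θ - gη₂ θ)
          else
            (p10 / η₃ θ) • gη₃ θ + (p01 / (η₁ θ - η₃ θ)) • (gη₁ θ - gη₃ θ)))
        θ := by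
  intro θ hθ
  obtain ⟨-, -, hp10, hp01⟩ := hp
  have hθΘ : θ ∈ Θ := interior_subset hθ
  obtain ⟨hF00θ, hF11θ, -, -, hη₃θ⟩ := hrange θ hθΘ
  have hη₂η₁ : η₂ θ < η₁ θ := by linarith [hη₁₂ θ hθΘ]
  have hη₃η₂ : ∀ᶠ y in 𝓝 θ, η₃ y ≤ η₂ y :=
    eventually_of_mem (mem_interior_iff_mem_nhds.1 hθ) hη₃₂
  have hF := (((hdF00 θ hθ).hasFDerivAt.log hF00θ.1.ne').const_mul p00).add
    (((hdF11 θ hθ).hasFDerivAt.log hF11θ.1.ne').const_mul p11)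
  have hsplit := hasFDerivAt_splitLogLik_profiledSplit hp10 hp01 (hdη₁ θ hθ).hasFDerivAt
    (hdη₂ θ hθ).hasFDerivAt (hdη₃ θ hθ).hasFDerivAt hη₃θ.1 hη₂η₁ hη₃η₂
  rw [hasGradientAt_iff_hasFDerivAt]
  refine ((hF.add hsplit).congr_fderiv ?_).congr_of_eventuallyEq (.of_forall fun ϑ => ?_)
  · split_ifs <;> simp only [map_add, map_smul, map_sub, smul_smul, div_eq_mul_inv]
  · simp only [Pi.add_apply, splitLogLik, profiledSplit, unconstrainedSplit]
    ring

/-- **Differentiability and piecewise gradient of the profiled log-likelihood in the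
entry game.**  With `F₀₀, F₁₁` the model probabilities of `(0,0)` and `(1,1)`, `η₁` the model
probability of `{(1,0),(0,1)}`, `η₃ ≤ η₂` the model bounds on the probability of `(1,0)`,
observed probabilities `p₀₀, p₁₁, p₁₀, p₀₁ > 0` summing to one, and `z*(θ)` the clamp of
`η₁(θ) p₁₀/(p₁₀+p₀₁)` to `[η₃(θ), η₂(θ)]`, the profiled log-likelihood
`V(θ) = p₀₀ ln F₀₀ + p₁₁ ln F₁₁ + p₁₀ ln z* + p₀₁ ln (η₁ − z*)` is differentiable on the
interior of `Θ` with gradient `p₀₀ ∇F₀₀/F₀₀ + p₁₁ ∇F₁₁/F₁₁ + G(θ)`, where `G` is given by the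
regime-dependent formulas. -/
theorem entry_game_profiled_loglikelihood_gradient {dθ : ℕ}
    (Θ : Set (EuclideanSpace ℝ (Fin dθ)))
    (F00 F11 η₁ η₂ η₃ : EuclideanSpace ℝ (Fin dθ) → ℝ)
    (gF00 gF11 gη₁ gη₂ gη₃ : EuclideanSpace ℝ (Fin dθ) → EuclideanSpace ℝ (Fin dθ))
    (c : ℝ) (hc : 0 < c)
    -- the model probabilities take values in (0,1)
    (hrange : ∀ θ ∈ Θ, F00 θ ∈ Ioo (0:ℝ) 1 ∧ F11 θ ∈ Ioo (0:ℝ) 1 ∧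
      η₁ θ ∈ Ioo (0:ℝ) 1 ∧ η₂ θ ∈ Ioo (0:ℝ) 1 ∧ η₃ θ ∈ Ioo (0:ℝ) 1)
    -- uniform lower bounds
    (hF00 : ∀ θ ∈ Θ, c ≤ F00 θ) (hF11 : ∀ θ ∈ Θ, c ≤ F11 θ)
    (hη₃₂ : ∀ θ ∈ Θ, η₃ θ ≤ η₂ θ)
    (hη₂ : ∀ θ ∈ Θ, c ≤ η₂ θ) (hη₃ : ∀ θ ∈ Θ, c ≤ η₃ θ)
    (hη₁₂ : ∀ θ ∈ Θ, c ≤ η₁ θ - η₂ θ) (hη₁₃ : ∀ θ ∈ Θ, c ≤ η₁ θ - η₃ θ)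
    -- accounting identity
    (hη₁eq : ∀ θ ∈ Θ, η₁ θ = 1 - F00 θ - F11 θ)
    -- continuous differentiability on `int Θ`, with the given gradients
    (hdF00 : ∀ θ ∈ interior Θ, HasGradientAt F00 (gF00 θ) θ)
    (hdF11 : ∀ θ ∈ interior Θ, HasGradientAt F11 (gF11 θ) θ)
    (hdη₁ : ∀ θ ∈ interior Θ, HasGradientAt η₁ (gη₁ θ) θ)
    (hdη₂ : ∀ θ ∈ interior Θ, HasGradientAt η₂ (gη₂ θ) θ)
    (hdη₃ : ∀ θ ∈ interior Θ, HasGradientAt η₃ (gη₃ θ) θ)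
    (hcF00 : ContinuousOn gF00 (interior Θ)) (hcF11 : ContinuousOn gF11 (interior Θ))
    (hcη₁ : ContinuousOn gη₁ (interior Θ)) (hcη₂ : ContinuousOn gη₂ (interior Θ))
    (hcη₃ : ContinuousOn gη₃ (interior Θ))
    -- observed probabilities
    (p00 p11 p10 p01 : ℝ)
    (hp : 0 < p00 ∧ 0 < p11 ∧ 0 < p10 ∧ 0 < p01)
    (hpsum : p00 + p11 + p10 + p01 = 1) :
    ∀ θ ∈ interior Θ,
      HasGradientAt
        (fun ϑ =>
          p00 * Real.log (F00 ϑ) + p11 * Real.log (F11 ϑ) +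
          p10 * Real.log (max (η₃ ϑ) (min (η₂ ϑ) (η₁ ϑ * p10 / (p10 + p01)))) +
          p01 * Real.log (η₁ ϑ - max (η₃ ϑ) (min (η₂ ϑ) (η₁ ϑ * p10 / (p10 + p01)))))
        ((p00 / F00 θ) • gF00 θ + (p11 / F11 θ) • gF11 θ +
          (if η₃ θ ≤ η₁ θ * p10 / (p10 + p01) ∧ η₁ θ * p10 / (p10 + p01) ≤ η₂ θ then
            ((p10 + p01) / η₁ θ) • gη₁ θ
          else if η₂ θ < η₁ θ * p10 / (p10 + p01) then
            (p10 / η₂ θ) • gη₂ θ + (p01 / (η₁ θ - η₂ θ)) • (gη₁ θ - gη₂ θ)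
          else
            (p10 / η₃ θ) • gη₃ θ + (p01 / (η₁ θ - η₃ θ)) • (gη₁ θ - gη₃ θ)))
        θ :=
  entry_game_profiled_loglikelihood_gradient_general Θ F00 F11 η₁ η₂ η₃ gF00 gF11 gη₁ gη₂ gη₃ c hc
    hrange hη₃₂ hη₁₂ hdF00 hdF11 hdη₁ hdη₂ hdη₃ p00 p11 p10 p01 hp
end

section
/- Proposition (continuity of the pseudo-true set in the misclassification parameter for the specialized entry game). Fix θ₀ = (θ_{1,0}, θ_{2,0}) ∈ [−0.45, 0)² and set δ_j = −0.5 + θ_{j,0}, a₀ = (1+δ₁)(1+δ₂), b₀ = −δ₂(1+δ₁), c₀ = 1 − a₀ − b₀. For γ ∈ Γ ⊆ [0,1] define p_γ((1,1)|1) = (1−γ) a₀ + 0.25 γ, p_γ((1,0)|1) = (1−γ) b₀ + 0.25 γ, p_γ((0,1)|1) = 1 − p_γ((1,1)|1) − p_γ((1,0)|1), and Θ*(p_γ) = Ξ*(p_γ) − (0.5, 0.5) where Ξ*(p_γ) = { ϑ ∈ [0.05, 0.5]² : ϑ₁ϑ₂ = p_γ((1,1)|1) and p_γ((1,1)|1)/(1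 − p_γ((1,0)|1)) ≤ ϑ₁ ≤ 1 − p_γ((0,1)|1) }. Then for every θ ∈ Θ = [−0.45, 0]², the map γ ↦ dist(θ, Θ*(p_γ)) is continuous on Γ, and hence the correspondence γ ↦ Θ*(p_γ) is both upper and lower hemicontinuous on Γ; in particular it is continuous at γ = 0. -/
open Set Metric Filter
open scoped Topology

noncomputable section

namespace SpecializedEntryGame

/-- Observed probability of outcome `(1,1)` given `X = 1` in the misclassified game. -/
def p11 (a₀ : ℝ) (γ : ℝ) : ℝ := (1 - γ) * a₀ + 0.25 * γ

/-- Observed probability of outcome `(1,0)` given `X = 1` in the misclassified game. -/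
def p10 (b₀ : ℝ) (γ : ℝ) : ℝ := (1 - γ) * b₀ + 0.25 * γ

/-- Observed probability of outcome `(0,1)` given `X = 1` in the misclassified game. -/
def p01 (a₀ b₀ : ℝ) (γ : ℝ) : ℝ := 1 - p11 a₀ γ - p10 b₀ γ

/-- The set `Ξ*(p_γ)` characterizing the pseudo-true set before recentering. -/
def Ξstar (a₀ b₀ : ℝ) (γ : ℝ) : Set (EuclideanSpace ℝ (Fin 2)) :=
  {ϑ | ϑ 0 ∈ Icc (0.05 : ℝ) 0.5 ∧ ϑ 1 ∈ Icc (0.05 : ℝ) 0.5 ∧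
       ϑ 0 * ϑ 1 = p11 a₀ γ ∧
       p11 a₀ γ / (1 - p10 b₀ γ) ≤ ϑ 0 ∧ ϑ 0 ≤ 1 - p01 a₀ b₀ γ}

/-- The vector `(0.5, 0.5)`. -/
def half : EuclideanSpace ℝ (Fin 2) := WithLp.toLp 2 (fun _ => (0.5 : ℝ))

/-- The pseudo-true set `Θ*(p_γ) = Ξ*(p_γ) − (0.5, 0.5)`. -/
def Θstar (a₀ b₀ : ℝ) (γ : ℝ) : Set (EuclideanSpace ℝ (Fin 2)) :=
  (fun ϑ => ϑ - half) '' Ξstar a₀ b₀ γ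

/-- The parameter space `Θ = [−0.45, 0]²`. -/
def Θspace : Set (EuclideanSpace ℝ (Fin 2)) :=
  {θ | θ 0 ∈ Icc (-0.45 : ℝ) 0 ∧ θ 1 ∈ Icc (-0.45 : ℝ) 0}

end SpecializedEntryGame

/-!
Writing `p = p₁₁` and `q = p₁₀`, the set `Ξ*(p_γ)` is the arc of the hyperbola `ϑ₁ ϑ₂ = p` over
the interval `B(p_γ)` of admissible `ϑ₁`. For `θ₀ ∈ [−0.45, 0)²` and `γ ∈ [0, 1]` the pair `(p, q)`
satisfies finitely many linear inequalities (they hold at `γ = 0` and `γ = 1`, hence on the segment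
between), and these make `B(p_γ)` a nonempty interval whose endpoints depend continuously on `γ`.
Running along `B(p_γ)` with a parameter `s ∈ [0, 1]` writes `Θ*(p_γ)` as `G(γ, ·) '' [0, 1]` for a
map `G` jointly continuous in `(γ, s)`. By compactness of `[0, 1]` the maps `G(γ, ·)` converge
uniformly as `γ → γ₀`, and uniformly close parametrisations give close distance functions
and mutually `ε`-thickened images.
-/

section ImageFamily

variable {α β E : Type*} [PseudoMetricSpace E]

lemma infDist_image_le_infDist_image_add {f g : β → E} {S : Set β} {ε : ℝ} (x : E)
    (hS : S.Nonempty) (hfg : ∀ s ∈ S, dist (f s) (g s) ≤ ε) :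
    infDist x (f '' S) ≤ infDist x (g '' S) + ε := by
  rw [← sub_le_iff_le_add, le_infDist (hS.image g)]
  rintro _ ⟨s, hs, rfl⟩
  calc infDist x (f '' S) - ε ≤ dist x (f s) - ε := by
        gcongr; exact infDist_le_dist_of_mem (mem_image_of_mem f hs)
    _ ≤ dist x (g s) := by linarith [dist_triangle x (g s) (f s), dist_comm (f s) (g s), hfg s hs]

lemma image_subset_thickening_image {f g : β → E} {S : Set β} {ε : ℝ}
    (hfg : ∀ s ∈ S, dist (f s) (g s) < ε) : f '' S ⊆ thickening ε (g '' S) := by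
  rintro _ ⟨s, hs, rfl⟩
  exact mem_thickening_iff.2 ⟨g s, mem_image_of_mem g hs, hfg s hs⟩

variable [TopologicalSpace α] [TopologicalSpace β] {f : α → β → E} {Γ : Set α} {S : Set β}
  {γ₀ : α}

lemma eventually_forall_dist_lt (hS : IsCompact S) (hf : ContinuousOn (Function.uncurry f) (Γ ×ˢ S))
    (hγ₀ : γ₀ ∈ Γ) {ε : ℝ} (hε : 0 < ε) :
    ∀ᶠ γ in 𝓝[Γ] γ₀, ∀ s ∈ S, dist (f γ s) (f γ₀ s) < ε := by
  obtain ⟨v, hv, hfv⟩ := hS.mem_uniformity_of_prod hf hγ₀ (dist_mem_uniformity hε)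
  filter_upwards [hv] with γ hγ using hfv γ hγ

lemma continuousOn_infDist_image (hS : IsCompact S) (hSne : S.Nonempty)
    (hf : ContinuousOn (Function.uncurry f) (Γ ×ˢ S)) (x : E) :
    ContinuousOn (fun γ => infDist x (f γ '' S)) Γ := by
  intro γ₀ hγ₀
  refine Metric.tendsto_nhds.2 fun ε hε => ?_
  filter_upwards [eventually_forall_dist_lt hS hf hγ₀ (half_pos hε)] with γ hγ
  have h₁ := infDist_image_le_infDist_image_add x hSne fun s hs => (hγ s hs).le
  have h₂ := infDist_image_le_infDist_image_add x hSne fun s hs =>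
    (dist_comm (f γ₀ s) (f γ s)).trans_le (hγ s hs).le
  rw [Real.dist_eq, abs_sub_lt_iff]
  constructor <;> linarith

lemma eventually_image_subset_thickening (hS : IsCompact S)
    (hf : ContinuousOn (Function.uncurry f) (Γ ×ˢ S)) (hγ₀ : γ₀ ∈ Γ) {ε : ℝ} (hε : 0 < ε) :
    ∀ᶠ γ in 𝓝[Γ] γ₀, f γ '' S ⊆ thickening ε (f γ₀ '' S) ∧
      f γ₀ '' S ⊆ thickening ε (f γ '' S) := by
  filter_upwards [eventually_forall_dist_lt hS hf hγ₀ hε] with γ hγ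
  exact ⟨image_subset_thickening_image hγ,
    image_subset_thickening_image fun s hs => dist_comm (f γ s) (f γ₀ s) ▸ hγ s hs⟩

end ImageFamily

namespace SpecializedEntryGame

/-- Linear conditions on `(p₁₁, p₁₀)` making `B(p)` a nonempty interval with `p₁₀ < 1`. -/
def Admissible (P Q : ℝ) : Prop :=
  0.0025 ≤ P ∧ P ≤ 0.25 ∧ P ≤ Q ∧ Q ≤ 0.95 ∧ 0.05 ≤ P + Q ∧ 2 * P + Q ≤ 1

lemma admissible_mul_mul_one_sub {x y : ℝ} (hx : x ∈ Icc (0.05 : ℝ) 0.5)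
    (hy : y ∈ Icc (0.05 : ℝ) 0.5) : Admissible (x * y) (x * (1 - y)) := by
  obtain ⟨hx₁, hx₂⟩ := hx
  obtain ⟨hy₁, hy₂⟩ := hy
  refine ⟨?_, ?_, ?_, ?_, ?_, ?_⟩ <;> nlinarith [mul_le_mul hx₁ hy₁ (by norm_num) (by linarith)]

lemma Admissible.convex_comb {P Q P' Q' γ : ℝ} (h : Admissible P Q) (h' : Admissible P' Q')
    (hγ : γ ∈ Icc (0 : ℝ) 1) :
    Admissible ((1 - γ) * P + γ * P') ((1 - γ) * Q + γ * Q') := by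
  obtain ⟨hγ₀, hγ₁⟩ := hγ
  have h₁ : 0 ≤ 1 - γ := sub_nonneg.2 hγ₁
  obtain ⟨h₁', h₂', h₃', h₄', h₅', h₆'⟩ := h'
  obtain ⟨h₁, h₂, h₃, h₄, h₅, h₆⟩ := h
  refine ⟨?_, ?_, ?_, ?_, ?_, ?_⟩ <;> nlinarith

lemma admissible_p11_p10 {a₀ b₀ γ : ℝ} (h : Admissible a₀ b₀) (hγ : γ ∈ Icc (0 : ℝ) 1) :
    Admissible (p11 a₀ γ) (p10 b₀ γ) := by
  have hquarter : Admissible 0.25 0.25 := by norm_num [Admissible]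
  convert h.convex_comb hquarter hγ using 1 <;> simp only [p11, p10] <;> ring

/-- With `ϑ₂ = P / ϑ₁`, the constraint `ϑ₂ ∈ [0.05, 0.5]` reads `2 P ≤ ϑ₁ ≤ 20 P`. -/
def lowerBound (P Q : ℝ) : ℝ := max (max 0.05 (2 * P)) (P / (1 - Q))

def upperBound (P Q : ℝ) : ℝ := min (min 0.5 (20 * P)) (P + Q)

lemma Admissible.lowerBound_le_upperBound {P Q : ℝ} (h : Admissible P Q) :
    lowerBound P Q ≤ upperBound P Q := by
  obtain ⟨h₁, h₂, h₃, h₄, h₅, h₆⟩ := h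
  have hQ : 0 < 1 - Q := by linarith
  simp only [lowerBound, upperBound, max_le_iff, le_min_iff, div_le_iff₀ hQ]
  refine ⟨⟨⟨⟨?_, ?_⟩, ?_⟩, ⟨?_, ?_⟩, ?_⟩, ⟨?_, ?_⟩, ?_⟩ <;> nlinarith

lemma Ξstar_eq_image (a₀ b₀ γ : ℝ) :
    Ξstar a₀ b₀ γ = (fun t => !₂[t, p11 a₀ γ / t]) ''
      Icc (lowerBound (p11 a₀ γ) (p10 b₀ γ)) (upperBound (p11 a₀ γ) (p10 b₀ γ)) := by
  have hp01 : 1 - p01 a₀ b₀ γ = p11 a₀ γ + p10 b₀ γ := by simp only [p01]; ring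
  ext ϑ
  simp only [Ξstar, hp01, lowerBound, upperBound, mem_ofPred_eq, mem_image, mem_Icc,
    max_le_iff, le_min_iff]
  constructor
  · rintro ⟨⟨h₁, h₂⟩, ⟨h₃, h₄⟩, h₅, h₆, h₇⟩
    have hϑ₀ : 0 < ϑ 0 := by linarith
    refine ⟨ϑ 0, ⟨⟨⟨h₁, by nlinarith⟩, h₆⟩, ⟨h₂, by nlinarith⟩, h₇⟩, ?_⟩
    ext i
    fin_cases i
    · rfl
    · simp [← h₅, hϑ₀.ne']
  · rintro ⟨t, ⟨⟨⟨h₁, h₂⟩, h₃⟩, ⟨h₄, h₅⟩, h₆⟩, rfl⟩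
    have ht : 0 < t := by linarith
    simp only [Matrix.cons_val_zero, Matrix.cons_val_one,
      le_div_iff₀ ht, div_le_iff₀ ht, mul_div_cancel₀ _ ht.ne']
    exact ⟨⟨h₁, h₄⟩, ⟨by linarith, by linarith⟩, trivial, h₃, h₆⟩

def ϑ₁Param (a₀ b₀ γ s : ℝ) : ℝ :=
  AffineMap.lineMap (lowerBound (p11 a₀ γ) (p10 b₀ γ)) (upperBound (p11 a₀ γ) (p10 b₀ γ)) s

def Θparam (a₀ b₀ γ s : ℝ) : EuclideanSpace ℝ (Fin 2) :=
  !₂[ϑ₁Param a₀ b₀ γ s, p11 a₀ γ / ϑ₁Param a₀ b₀ γ s] - half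

lemma Admissible.ϑ₁Param_pos {a₀ b₀ γ s : ℝ} (h : Admissible (p11 a₀ γ) (p10 b₀ γ))
    (hs : s ∈ Icc (0 : ℝ) 1) : 0 < ϑ₁Param a₀ b₀ γ s := by
  have hmem := lineMap_mem_segment (𝕜 := ℝ) (lowerBound (p11 a₀ γ) (p10 b₀ γ))
    (upperBound (p11 a₀ γ) (p10 b₀ γ)) hs
  rw [segment_eq_Icc h.lowerBound_le_upperBound] at hmem
  have hlower : (0.05 : ℝ) ≤ lowerBound (p11 a₀ γ) (p10 b₀ γ) :=
    le_max_of_le_left (le_max_left _ _)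
  exact lt_of_lt_of_le (by norm_num) (hlower.trans hmem.1)

lemma Θstar_eq_image {a₀ b₀ γ : ℝ} (h : Admissible (p11 a₀ γ) (p10 b₀ γ)) :
    Θstar a₀ b₀ γ = Θparam a₀ b₀ γ '' Icc 0 1 := by
  rw [Θstar, Ξstar_eq_image, ← segment_eq_Icc (𝕜 := ℝ) h.lowerBound_le_upperBound,
    segment_eq_image_lineMap, image_image, image_image]
  rfl

lemma continuousOn_Θparam {a₀ b₀ : ℝ} {Γ : Set ℝ}
    (hΓ : ∀ γ ∈ Γ, Admissible (p11 a₀ γ) (p10 b₀ γ)) :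
    ContinuousOn (Function.uncurry (Θparam a₀ b₀)) (Γ ×ˢ Icc 0 1) := by
  have hp11 : Continuous (p11 a₀) := by unfold p11; fun_prop
  have hp10 : Continuous (p10 b₀) := by unfold p10; fun_prop
  have hlower : ContinuousOn (fun q : ℝ × ℝ => lowerBound (p11 a₀ q.1) (p10 b₀ q.1))
      (Γ ×ˢ Icc 0 1) := by
    refine ContinuousOn.sup (by fun_prop) (ContinuousOn.div (by fun_prop) (by fun_prop) ?_)
    rintro ⟨γ, s⟩ ⟨hγ, -⟩
    linarith [(hΓ γ hγ).2.2.2.1]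
  have hϑ₁ : ContinuousOn (fun q : ℝ × ℝ => ϑ₁Param a₀ b₀ q.1 q.2) (Γ ×ˢ Icc 0 1) := by
    simp only [ϑ₁Param, AffineMap.lineMap_apply_ring']
    refine ContinuousOn.add (ContinuousOn.mul (by fun_prop) (ContinuousOn.sub ?_ hlower)) hlower
    unfold upperBound
    fun_prop
  have hϑ₂ : ContinuousOn (fun q : ℝ × ℝ => p11 a₀ q.1 / ϑ₁Param a₀ b₀ q.1 q.2) (Γ ×ˢ Icc 0 1) :=
    ContinuousOn.div (by fun_prop) hϑ₁ fun q hq => ((hΓ q.1 hq.1).ϑ₁Param_pos hq.2).ne'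
  exact ((PiLp.continuous_toLp 2 _).comp_continuousOn
    (hϑ₁.matrixVecCons (hϑ₂.matrixVecCons continuousOn_const))).sub continuousOn_const

end SpecializedEntryGame

open SpecializedEntryGame

/-- **Continuity of the pseudo-true set in the misclassification parameter for the
specialized entry game.**  For the data-generating value `θ₀ = (θ₁₀, θ₂₀) ∈ [−0.45, 0)²`,
with `δ_j = −0.5 + θ_{j,0}`, `a₀ = (1+δ₁)(1+δ₂)`, `b₀ = −δ₂(1+δ₁)`, and the observed
conditional pmf `p_γ(·|X=1)` an affine function of the misclassification probability `γ`:
for every `θ` in the parameter space the map `γ ↦ dist(θ, Θ*(p_γ))` is continuous on `Γ`,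
and hence the correspondence `γ ↦ Θ*(p_γ)` is both upper and lower hemicontinuous on `Γ`;
in particular it is continuous at `γ = 0`. -/
theorem specialized_entry_game_pseudo_true_set_continuity
    (θ₁₀ θ₂₀ : ℝ)
    (hθ₁ : θ₁₀ ∈ Ico (-0.45 : ℝ) 0) (hθ₂ : θ₂₀ ∈ Ico (-0.45 : ℝ) 0)
    (Γ : Set ℝ) (hΓ : Γ ⊆ Icc (0 : ℝ) 1) :
    (∀ θ ∈ Θspace,
      ContinuousOn
        (fun γ => Metric.infDist θ
          (Θstar ((1 + (-0.5 + θ₁₀)) * (1 + (-0.5 + θ₂₀)))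
            (-(-0.5 + θ₂₀) * (1 + (-0.5 + θ₁₀))) γ)) Γ) ∧
    (∀ γ₀ ∈ Γ, ∀ ε > (0 : ℝ), ∀ᶠ γ in 𝓝[Γ] γ₀,
      Θstar ((1 + (-0.5 + θ₁₀)) * (1 + (-0.5 + θ₂₀)))
          (-(-0.5 + θ₂₀) * (1 + (-0.5 + θ₁₀))) γ
        ⊆ Metric.thickening ε
            (Θstar ((1 + (-0.5 + θ₁₀)) * (1 + (-0.5 + θ₂₀)))
              (-(-0.5 + θ₂₀) * (1 + (-0.5 + θ₁₀))) γ₀) ∧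
      Θstar ((1 + (-0.5 + θ₁₀)) * (1 + (-0.5 + θ₂₀)))
          (-(-0.5 + θ₂₀) * (1 + (-0.5 + θ₁₀))) γ₀
        ⊆ Metric.thickening ε
            (Θstar ((1 + (-0.5 + θ₁₀)) * (1 + (-0.5 + θ₂₀)))
              (-(-0.5 + θ₂₀) * (1 + (-0.5 + θ₁₀))) γ)) := by
  set a₀ := (1 + (-0.5 + θ₁₀)) * (1 + (-0.5 + θ₂₀))
  set b₀ := -(-0.5 + θ₂₀) * (1 + (-0.5 + θ₁₀))
  have hadm₀ : Admissible a₀ b₀ := by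
    convert admissible_mul_mul_one_sub (x := 1 + (-0.5 + θ₁₀)) (y := 1 + (-0.5 + θ₂₀))
      ⟨by linarith [hθ₁.1], by linarith [hθ₁.2]⟩ ⟨by linarith [hθ₂.1], by linarith [hθ₂.2]⟩
      using 1
    ring
  have hadm : ∀ γ ∈ Γ, Admissible (p11 a₀ γ) (p10 b₀ γ) :=
    fun γ hγ => admissible_p11_p10 hadm₀ (hΓ hγ)
  have himage : ∀ γ ∈ Γ, Θstar a₀ b₀ γ = Θparam a₀ b₀ γ '' Icc 0 1 :=
    fun γ hγ => Θstar_eq_image (hadm γ hγ)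
  have hcont := continuousOn_Θparam hadm
  refine ⟨fun θ _ => ?_, fun γ₀ hγ₀ ε hε => ?_⟩
  · refine (continuousOn_infDist_image isCompact_Icc (nonempty_Icc.2 zero_le_one) hcont θ).congr
      fun γ hγ => ?_
    rw [himage γ hγ]
  · filter_upwards [self_mem_nhdsWithin,
      eventually_image_subset_thickening isCompact_Icc hcont hγ₀ hε] with γ hγ hsub
    rwa [himage γ hγ, himage γ₀ hγ₀]
end
end
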